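/- arXiv:1611.09656 — 2 statements merged into one kernel-verified Lean document; each statement's English description precedes it below -/
import Mathlib

section
/- Let F be a field of characteristic zero, n₁, n₂ ≥ 1 integers, A₁ an n₁×n₁ matrix and A₂ an n₂×n₂ matrix over F, b₁ ∈ F^{n₁}, b₂ ∈ F^{n₂} column vectors and c₁ ∈ F^{n₁}, c₂ ∈ F^{n₂} row vectors. Let n = n₁+n₂, A the block-diagonal matrix with blocks A₁ and A₂, b the concatenation of b₁ and b₂, and c the concatenation of c₁ and c₂. Then d_n(A,b,c) = det(χ_{A₁}(A₂))² · d_{n₁}(A₁,b₁,c₁) · d_{n₂}(A₂,b₂,c₂), where χ_{A₁}(A₂) is the evaluation of the characteristic polynomial of A₁ at the matrix A₂. -/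
/-- The invariant `d_r(A, b, c)` of a square matrix `A`, a column vector `b` and a row
vector `c` : the determinant of the `r × r` matrix whose `(i,j)` entry is the scalar
`c · A^{i+j} · b`, `0 ≤ i, j ≤ r - 1`. By convention `d_0 = 1`. -/
def dMat {F : Type*} [CommRing F] {ι : Type*} [Fintype ι] [DecidableEq ι]
    (A : Matrix ι ι F) (b c : ι → F) (r : ℕ) : F :=
  (Matrix.of fun i j : Fin r =>
      dotProduct c (Matrix.mulVec (A ^ ((i : ℕ) + (j : ℕ))) b)).det

/-!
The Hankel matrix `(c A^(i+j) b)` is `K_c(A) * K_b(Aᵀ)ᵀ`, where the Krylov matrix `K_c(A)` has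
rows `c A^i`; so if `A` has size `r`, then `d_r(A, b, c) = det K_c(A) * det K_b(Aᵀ)`.
For `A = diag(A₁, A₂)` and `p = χ_{A₁}`, multiply `K_c(A)` on the left by the unitriangular
matrix whose rows are the coefficients of `X^m` (`m < n₁`) and `X^t p` (`t < n₂`). This replaces
the row `c A^(n₁+t)` by `c A^t p(A) = (c₁ A₁^t p(A₁), c₂ A₂^t p(A₂))`, whose first half vanishes
by Cayley–Hamilton. The result is block triangular with diagonal blocks `K_{c₁}(A₁)` and
`K_{c₂}(A₂) p(A₂)`; the same argument for `Aᵀ` gives the second factor `det p(A₂)`.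
-/

open Matrix Polynomial

section

variable {R : Type*} [CommRing R] {ι κ : Type*} [Fintype ι] [DecidableEq ι] [Fintype κ]
  [DecidableEq κ]

namespace Matrix

theorem aeval_transpose (A : Matrix ι ι R) (p : R[X]) : aeval Aᵀ p = (aeval A p)ᵀ := by
  induction p using Polynomial.induction_on' with
  | add p q hp hq => simp [hp, hq]
  | monomial n a => simp [aeval_monomial, ← Algebra.smul_def, transpose_pow]

theorem aeval_fromBlocks (A₁ : Matrix ι ι R) (A₂ : Matrix κ κ R) (p : R[X]) :
    aeval (fromBlocks A₁ 0 0 A₂) p = fromBlocks (aeval A₁ p) 0 0 (aeval A₂ p) := by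
  induction p using Polynomial.induction_on' with
  | add p q hp hq => simp [hp, hq, fromBlocks_add]
  | monomial n a =>
    simp [aeval_monomial, ← Algebra.smul_def, fromBlocks_diagonal_pow, fromBlocks_smul]

end Matrix

def krylov (A : Matrix ι ι R) (c : ι → R) (r : ℕ) : Matrix (Fin r) ι R :=
  of fun i => c ᵥ* A ^ (i : ℕ)

@[simp]
theorem krylov_apply (A : Matrix ι ι R) (c : ι → R) {r : ℕ} (i : Fin r) :
    krylov A c r i = c ᵥ* A ^ (i : ℕ) :=
  rfl

theorem hankel_eq_krylov_mul_krylov_transpose (A : Matrix ι ι R) (b c : ι → R) (r : ℕ) :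
    (of fun i j : Fin r => c ⬝ᵥ A ^ ((i : ℕ) + (j : ℕ)) *ᵥ b) =
      krylov A c r * (krylov Aᵀ b r)ᵀ := by
  ext i j
  rw [of_apply, pow_add, ← mulVec_mulVec, dotProduct_mulVec, mul_apply]
  simp [← transpose_pow, vecMul_transpose, dotProduct]

theorem dMat_eq_det_mul_det {r : ℕ} (A : Matrix ι ι R) (b c : ι → R) (e : ι ≃ Fin r) :
    dMat A b c r =
      ((krylov A c r).submatrix e id).det * ((krylov Aᵀ b r).submatrix e id).det := by
  rw [dMat, hankel_eq_krylov_mul_krylov_transpose, ← det_submatrix_equiv_self e,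
    ← submatrix_mul_equiv _ _ _ (Equiv.refl _), det_mul, ← transpose_submatrix, det_transpose]
  rfl

theorem dMat_fin_eq_det_mul_det {r : ℕ} (A : Matrix (Fin r) (Fin r) R) (b c : Fin r → R) :
    dMat A b c r = (krylov A c r).det * (krylov Aᵀ b r).det := by
  simpa using dMat_eq_det_mul_det A b c (Equiv.refl _)

theorem det_coeff_of_monic_of_natDegree_eq {r : ℕ} (q : Fin r → R[X]) (hq : ∀ i, (q i).Monic)
    (hdeg : ∀ i, (q i).natDegree = i) : (of fun i j : Fin r => (q i).coeff j).det = 1 := by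
  rw [det_of_isLowerTriangular _ (fun i j hij => ?_)]
  · exact Finset.prod_eq_one fun i _ => by simpa [hdeg i] using (hq i).coeff_natDegree
  · exact coeff_eq_zero_of_natDegree_lt (by simpa [hdeg i] using hij)

theorem coeff_mul_krylov {s r : ℕ} (q : Fin s → R[X]) (hq : ∀ i, (q i).natDegree < r)
    (A : Matrix ι ι R) (c : ι → R) :
    (of fun (i : Fin s) (j : Fin r) => (q i).coeff j) * krylov A c r =
      of fun i => c ᵥ* aeval A (q i) := by
  ext i k
  rw [of_apply, aeval_eq_sum_range' (hq i), ← Fin.sum_univ_eq_sum_range, mul_apply]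
  simp [vecMul_sum, vecMul_smul, Finset.sum_apply]

theorem det_krylov_fromBlocks_eq_of_monic [Nontrivial R] {n₁ n₂ : ℕ}
    (A₁ : Matrix (Fin n₁) (Fin n₁) R) (A₂ : Matrix (Fin n₂) (Fin n₂) R)
    (c₁ : Fin n₁ → R) (c₂ : Fin n₂ → R) {p : R[X]} (hp : p.Monic) (hdeg : p.natDegree = n₁) :
    ((krylov (fromBlocks A₁ 0 0 A₂) (Sum.elim c₁ c₂) (n₁ + n₂)).submatrix
        finSumFinEquiv id).det =
      (fromBlocks (krylov A₁ c₁ n₁) (krylov A₂ c₂ n₁)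
        (krylov A₁ c₁ n₂ * aeval A₁ p) (krylov A₂ c₂ n₂ * aeval A₂ p)).det := by
  set K := krylov (fromBlocks A₁ 0 0 A₂) (Sum.elim c₁ c₂) (n₁ + n₂)
  set q : Fin (n₁ + n₂) → R[X] := fun m =>
    if (m : ℕ) < n₁ then X ^ (m : ℕ) else X ^ ((m : ℕ) - n₁) * p
  have hq_monic : ∀ m, (q m).Monic := fun m => by
    by_cases h : (m : ℕ) < n₁ <;> simp [q, h, (monic_X_pow _).mul hp]
  have hq_deg : ∀ m, (q m).natDegree = m := fun m => by
    by_cases h : (m : ℕ) < n₁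
    · simp [q, h]
    · simp [q, h, (monic_X_pow _).natDegree_mul hp, hdeg]
      omega
  have hrows := coeff_mul_krylov q (fun m => (hq_deg m).trans_lt m.2) (fromBlocks A₁ 0 0 A₂)
    (Sum.elim c₁ c₂)
  calc (K.submatrix finSumFinEquiv id).det
      = ((of fun i j : Fin (n₁ + n₂) => (q i).coeff j).submatrix finSumFinEquiv finSumFinEquiv *
          K.submatrix finSumFinEquiv id).det := by
        rw [det_mul, det_submatrix_equiv_self,
          det_coeff_of_monic_of_natDegree_eq q hq_monic hq_deg, one_mul]
    _ = _ := by
        rw [submatrix_mul_equiv, hrows]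
        congr 1
        ext (i | t) (j | u) <;>
          simp [q, aeval_fromBlocks, vecMul_fromBlocks, ← vecMul_vecMul, mul_apply_eq_vecMul]

theorem det_krylov_fromBlocks [Nontrivial R] {n₁ n₂ : ℕ}
    (A₁ : Matrix (Fin n₁) (Fin n₁) R) (A₂ : Matrix (Fin n₂) (Fin n₂) R)
    (c₁ : Fin n₁ → R) (c₂ : Fin n₂ → R) :
    ((krylov (fromBlocks A₁ 0 0 A₂) (Sum.elim c₁ c₂) (n₁ + n₂)).submatrix
        finSumFinEquiv id).det =
      (aeval A₂ A₁.charpoly).det * (krylov A₁ c₁ n₁).det * (krylov A₂ c₂ n₂).det := by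
  rw [det_krylov_fromBlocks_eq_of_monic A₁ A₂ c₁ c₂ A₁.charpoly_monic
      (by rw [charpoly_natDegree_eq_dim, Fintype.card_fin]),
    aeval_self_charpoly, Matrix.mul_zero, det_fromBlocks_zero₂₁, det_mul]
  ring

end

theorem stmt_3_general (F : Type*) [Field F]
    (n₁ n₂ : ℕ)
    (A₁ : Matrix (Fin n₁) (Fin n₁) F) (A₂ : Matrix (Fin n₂) (Fin n₂) F)
    (b₁ c₁ : Fin n₁ → F) (b₂ c₂ : Fin n₂ → F) :
    dMat (Matrix.fromBlocks A₁ 0 0 A₂) (Sum.elim b₁ b₂) (Sum.elim c₁ c₂) (n₁ + n₂) =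
      (Polynomial.aeval A₂ A₁.charpoly).det ^ 2 * dMat A₁ b₁ c₁ n₁ * dMat A₂ b₂ c₂ n₂ := by
  rw [dMat_eq_det_mul_det _ _ _ finSumFinEquiv, fromBlocks_transpose, transpose_zero,
    transpose_zero, det_krylov_fromBlocks, det_krylov_fromBlocks, charpoly_transpose,
    aeval_transpose, det_transpose, dMat_fin_eq_det_mul_det, dMat_fin_eq_det_mul_det]
  ring

/-- For the block-diagonal matrix `A = diag(A₁, A₂)`, `b` the concatenation
of `b₁, b₂` and `c` the concatenation of `c₁, c₂`, with `n = n₁ + n₂`, one has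
`d_n(A,b,c) = det(χ_{A₁}(A₂))² · d_{n₁}(A₁,b₁,c₁) · d_{n₂}(A₂,b₂,c₂)`. -/
theorem stmt_3 (F : Type*) [Field F] [CharZero F]
    (n₁ n₂ : ℕ) (h₁ : 1 ≤ n₁) (h₂ : 1 ≤ n₂)
    (A₁ : Matrix (Fin n₁) (Fin n₁) F) (A₂ : Matrix (Fin n₂) (Fin n₂) F)
    (b₁ c₁ : Fin n₁ → F) (b₂ c₂ : Fin n₂ → F) :
    dMat (Matrix.fromBlocks A₁ 0 0 A₂) (Sum.elim b₁ b₂) (Sum.elim c₁ c₂) (n₁ + n₂) =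
      (Polynomial.aeval A₂ A₁.charpoly).det ^ 2 * dMat A₁ b₁ c₁ n₁ * dMat A₂ b₂ c₂ n₂ :=
  stmt_3_general F n₁ n₂ A₁ A₂ b₁ c₁ b₂ c₂
end

section
/- Let E be a field of characteristic zero, σ a ring automorphism of E with σ∘σ = id, V a finite-dimensional E-vector space, Φ a nondegenerate σ-hermitian form on V, A an endomorphism of V that is self-adjoint for Φ, and b ∈ V. Then det((Φ(A^i(b), A^j(b)))_{0 ≤ i,j ≤ r-1}) = 0 for every integer r ≥ 1 if and only if Φ(b, A^i(b)) = 0 for every integer i ≥ 0. -/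
/-- A `σ`-hermitian form on a vector space `V` over `E`: additive in each variable,
`σ`-semilinear in the first, linear in the second, with `Φ (y, x) = σ (Φ (x, y))`. -/
def IsHermitianForm {E V : Type*} [Field E] [AddCommGroup V] [Module E V]
    (σ : E → E) (Φ : V → V → E) : Prop :=
  (∀ x x' y, Φ (x + x') y = Φ x y + Φ x' y) ∧
  (∀ x y y', Φ x (y + y') = Φ x y + Φ x y') ∧
  (∀ (a : E) (x y : V), Φ (a • x) y = σ a * Φ x y) ∧
  (∀ (a : E) (x y : V), Φ x (a • y) = a * Φ x y) ∧
  (∀ x y, Φ y x = σ (Φ x y))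

/-!
Self-adjointness of `A` makes the Gram matrix `(Φ (Aⁱ b, Aʲ b))` a Hankel matrix
`(c (i + j))` with `c k = Φ (b, Aᵏ b)`. If `n` is the least index with `c n ≠ 0`, the Hankel
matrix of size `n + 1` becomes upper triangular with constant diagonal `c n` once its rows are
reversed, so its determinant is `± (c n) ^ (n + 1) ≠ 0`.
-/

open Matrix Equiv

def hankelMatrix {R : Type*} (c : ℕ → R) (r : ℕ) : Matrix (Fin r) (Fin r) R :=
  Matrix.of fun i j => c (i + j)

section Hankel

variable {R : Type*}

theorem isUpperTriangular_hankelMatrix_submatrix_revPerm [Zero R] {c : ℕ → R} {n : ℕ}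
    (hc : ∀ k < n, c k = 0) :
    ((hankelMatrix c (n + 1)).submatrix Fin.revPerm id).IsUpperTriangular := by
  intro i j (hij : j < i)
  have hi := i.isLt
  rw [Fin.lt_def] at hij
  exact hc _ (by simp only [Fin.revPerm_apply, Fin.val_rev, id_eq]; omega)

theorem sign_revPerm_mul_det_hankelMatrix [CommRing R] {c : ℕ → R} {n : ℕ}
    (hc : ∀ k < n, c k = 0) :
    (Perm.sign (Fin.revPerm : Perm (Fin (n + 1))) : R) * (hankelMatrix c (n + 1)).det =
      c n ^ (n + 1) := by
  rw [← det_permute,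
    det_of_isUpperTriangular (isUpperTriangular_hankelMatrix_submatrix_revPerm hc)]
  have hdiag (i : Fin (n + 1)) : (hankelMatrix c (n + 1)).submatrix Fin.revPerm id i i = c n := by
    simp only [hankelMatrix, submatrix_apply, of_apply, Fin.revPerm_apply, Fin.val_rev, id_eq]
    congr 1
    omega
  simp only [hdiag, Finset.prod_const, Finset.card_univ, Fintype.card_fin]

theorem forall_det_hankelMatrix_eq_zero_iff [CommRing R] [NoZeroDivisors R] (c : ℕ → R) :
    (∀ r, 1 ≤ r → (hankelMatrix c r).det = 0) ↔ ∀ k, c k = 0 := by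
  constructor
  · intro hdet k
    induction k using Nat.strong_induction_on with
    | _ n ih =>
      have hpow := sign_revPerm_mul_det_hankelMatrix ih
      rw [hdet (n + 1) (Nat.le_add_left 1 n), mul_zero] at hpow
      exact (pow_eq_zero_iff n.succ_ne_zero).mp hpow.symm
  · intro hc r hr
    have hzero : hankelMatrix c r = 0 := by
      ext i j
      exact hc _
    have : Nonempty (Fin r) := ⟨⟨0, hr⟩⟩
    rw [hzero, det_zero]

end Hankel

theorem pow_apply_left_eq_of_forall_apply_left_eq {R V X : Type*} [Semiring R] [AddCommMonoid V]
    [Module R V] (Φ : V → V → X) {A : Module.End R V} (hA : ∀ x y, Φ (A x) y = Φ x (A y))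
    (i : ℕ) (x y : V) : Φ ((A ^ i) x) y = Φ x ((A ^ i) y) := by
  induction i generalizing x y with
  | zero => rfl
  | succ i ih =>
    rw [pow_succ, Module.End.mul_apply, ih, hA, ← Module.End.mul_apply, ← pow_succ', pow_succ]

theorem stmt_11_general (E : Type*) [Field E]
    (V : Type*) [AddCommGroup V] [Module E V]
    (Φ : V → V → E)
    (A : V →ₗ[E] V) (hA : ∀ x y, Φ (A x) y = Φ x (A y)) (b : V) :
    (∀ r : ℕ, 1 ≤ r →
        (Matrix.of fun i j : Fin r => Φ ((A ^ (i : ℕ)) b) ((A ^ (j : ℕ)) b)).det = 0) ↔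
      ∀ i : ℕ, Φ b ((A ^ i) b) = 0 := by
  have hGram (r : ℕ) : (Matrix.of fun i j : Fin r => Φ ((A ^ (i : ℕ)) b) ((A ^ (j : ℕ)) b)) =
      hankelMatrix (fun k => Φ b ((A ^ k) b)) r := by
    ext i j
    rw [of_apply, pow_apply_left_eq_of_forall_apply_left_eq Φ hA, ← Module.End.mul_apply,
      ← pow_add]
    rfl
  simp only [hGram]
  exact forall_det_hankelMatrix_eq_zero_iff _

/-- For a nondegenerate `σ`-hermitian form `Φ`, an endomorphism `A`
self-adjoint for `Φ` and a vector `b`, the determinants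
`det ((Φ (A^i b, A^j b))_{0 ≤ i,j ≤ r-1})` vanish for all `r ≥ 1` if and only if
`Φ (b, A^i b) = 0` for all `i ≥ 0`. -/
theorem stmt_11 (E : Type*) [Field E] [CharZero E]
    (V : Type*) [AddCommGroup V] [Module E V] [FiniteDimensional E V]
    (σ : E ≃+* E) (hσ : ∀ x, σ (σ x) = x)
    (Φ : V → V → E) (hΦ : IsHermitianForm (⇑σ) Φ)
    (hnd : ∀ x, (∀ y, Φ x y = 0) → x = 0)
    (A : V →ₗ[E] V) (hA : ∀ x y, Φ (A x) y = Φ x (A y)) (b : V) :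
    (∀ r : ℕ, 1 ≤ r →
        (Matrix.of fun i j : Fin r => Φ ((A ^ (i : ℕ)) b) ((A ^ (j : ℕ)) b)).det = 0) ↔
      ∀ i : ℕ, Φ b ((A ^ i) b) = 0 :=
  stmt_11_general E V Φ A hA b
end
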